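/- Telescoping reduction of the bottom-up queue-jumping model at zero noise: let r be a strict partial order on a finite type A with |A| = m ≥ 1 and let Y : Fin m ≃ A be an enumeration. Then ∏_{j=1}^{m} C̃_{Y_j}(r[{Y_1, …, Y_j}]) / C(r[{Y_1, …, Y_j}]) equals 1/C(r) if Y is a linear extension of r, and equals 0 otherwise, where C̃_a denotes the count of linear extensions ending with a and r[{Y_1, …, Y_j}] is the suborder of r on the prefix set {Y_1, …, Y_j}. -/

import Mathlib

open scoped Classical

/-!
Removing the last entry `a` of a linear extension of `r` leaves a linear extension of `r`
restricted to the other elements, and conversely when `a` is minimal; hence `C̃_a(r)` is the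
number of linear extensions of `r` without `a` if `a` is minimal, and `0` otherwise.
If `Y` is a linear extension, `Y_j` is minimal in the prefix `{Y_1, …, Y_j}`, so the `j`-th
factor is `C(r[{Y_1, …, Y_(j-1)}]) / C(r[{Y_1, …, Y_j}])` and the product telescopes to `1 / C(r)`;
no denominator vanishes because `Y` restricts to a linear extension of every suborder.
If `Y` is not, some `Y_j` lies above an earlier `Y_i`, and the `j`-th factor is `0`.
-/

/-- `Y` is a linear extension of `r`: for positions `i < j`, the later element is never
above the earlier one. -/
def IsLinExt {A : Type*} {n : ℕ} (r : A → A → Prop) (Y : Fin n ≃ A) : Prop :=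
  ∀ i j : Fin n, i < j → ¬ r (Y j) (Y i)

/-- `C(r)`: the number of linear extensions of `r`. -/
noncomputable def numExt {A : Type*} [Fintype A] (r : A → A → Prop) : ℕ :=
  Nat.card {Y : Fin (Fintype.card A) ≃ A // IsLinExt r Y}

/-- `C̃_a(r)`: the number of linear extensions of `r` whose last entry is `a`. -/
noncomputable def numExtLast {A : Type*} [Fintype A] (r : A → A → Prop) (a : A) : ℕ :=
  Nat.card {Y : Fin (Fintype.card A) ≃ A //
    IsLinExt r Y ∧ ∀ i : Fin (Fintype.card A), (i : ℕ) = Fintype.card A - 1 → Y i = a}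

/-- The suborder `r[O]`: the restriction of `r` to the subset `O`. -/
def subrel {A : Type*} (r : A → A → Prop) (O : Set A) : O → O → Prop :=
  fun x y => r (x : A) (y : A)

theorem Finset.prod_range_div'_of_ne_zero {G₀ : Type*} [CommGroupWithZero G₀] {f : ℕ → G₀}
    (hf : ∀ k, f k ≠ 0) (n : ℕ) : ∏ i ∈ range n, f i / f (i + 1) = f 0 / f n := by
  lift f to ℕ → G₀ˣ using fun k => (hf k).isUnit
  simpa [Units.val_div_eq_div_val] using congrArg Units.val (prod_range_div' f n)

section LinearExtensions

variable {A B : Type*} {r : A → A → Prop} {n : ℕ}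

theorem isLinExt_finCongr_trans_iff {k : ℕ} (h : n = k) (Y : Fin k ≃ A) :
    IsLinExt r ((finCongr h).trans Y) ↔ IsLinExt r Y := by
  subst h; rfl

theorem isLinExt_trans_relIso_iff {s : B → B → Prop} (e : r ≃r s) (Y : Fin n ≃ A) :
    IsLinExt s (Y.trans e.toEquiv) ↔ IsLinExt r Y :=
  forall₂_congr fun _ _ => imp_congr_right fun _ => not_congr e.map_rel_iff

theorem isLinExt_iff_of_forall_not_rel_last (Y : Fin (n + 1) ≃ A)
    (hmin : ∀ b, ¬ r (Y (Fin.last n)) b) :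
    IsLinExt r Y ↔ ∀ i j : Fin n, i < j → ¬ r (Y j.castSucc) (Y i.castSucc) := by
  refine ⟨fun h i j hij => h _ _ (Fin.castSucc_lt_castSucc_iff.2 hij), fun h i j hij => ?_⟩
  induction j using Fin.lastCases with
  | last => exact hmin _
  | cast j =>
    induction i using Fin.lastCases with
    | last => exact absurd hij (Fin.le_last _).not_gt
    | cast i => exact h i j (Fin.castSucc_lt_castSucc_iff.1 hij)

variable [Fintype A]

theorem numExt_eq_natCard (h : Fintype.card A = n) :
    numExt r = Nat.card {Y : Fin n ≃ A // IsLinExt r Y} := by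
  subst h; rfl

theorem numExtLast_eq_natCard (h : Fintype.card A = n + 1) (a : A) :
    numExtLast r a = Nat.card {Y : Fin (n + 1) ≃ A // IsLinExt r Y ∧ Y (Fin.last n) = a} := by
  unfold numExtLast
  generalize Fintype.card A = k at h ⊢
  subst h
  refine Nat.card_congr (Equiv.subtypeEquivRight fun Y => and_congr_right' ?_)
  refine ⟨fun h => h _ (by simp), fun h i hi => ?_⟩
  rwa [show i = Fin.last n from Fin.ext (by simpa using hi)]

theorem numExt_congr [Fintype B] {s : B → B → Prop} (e : r ≃r s) : numExt r = numExt s := by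
  have h := Fintype.card_congr e.toEquiv
  refine Nat.card_congr (Equiv.subtypeEquiv ((finCongr h).equivCongr e.toEquiv) fun Y => ?_)
  change IsLinExt r Y ↔ IsLinExt s ((finCongr h).symm.trans (Y.trans e.toEquiv))
  rw [finCongr_symm, isLinExt_finCongr_trans_iff, isLinExt_trans_relIso_iff]

theorem numExt_pos_of_isLinExt (Y : Fin n ≃ A) (hY : IsLinExt r Y) : 0 < numExt r := by
  have h : Fintype.card A = n := by simpa using Fintype.card_congr Y.symm
  rw [numExt_eq_natCard h]
  exact Nat.card_pos_iff.2 ⟨⟨⟨Y, hY⟩⟩, inferInstance⟩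

theorem numExt_of_isEmpty [IsEmpty A] (r : A → A → Prop) : numExt r = 1 := by
  refine le_antisymm ?_ (numExt_pos_of_isLinExt (Equiv.equivOfIsEmpty (Fin 0) A) nofun)
  rw [numExt_eq_natCard (Fintype.card_eq_zero (α := A))]
  exact Finite.card_le_one_iff_subsingleton.2 inferInstance

theorem numExtLast_eq_zero_of_rel {a b : A} (hab : r a b) (hba : b ≠ a) :
    numExtLast r a = 0 := by
  refine Nat.card_eq_zero.2 (Or.inl ⟨fun ⟨Y, hY, hlast⟩ => ?_⟩)
  have hpos : 0 < Fintype.card A := Fintype.card_pos_iff.2 ⟨a⟩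
  set L : Fin (Fintype.card A) := ⟨Fintype.card A - 1, by omega⟩
  have hYL : Y L = a := hlast L rfl
  have hbL : Y.symm b ≠ L := fun h => hba (by rw [← hYL, ← h, Y.apply_symm_apply])
  have hlt : Y.symm b < L := (Fin.le_def.2 (Nat.le_sub_one_of_lt (Y.symm b).isLt)).lt_of_ne hbL
  exact hY _ L hlt (by rwa [hYL, Y.apply_symm_apply])

theorem numExtLast_eq_numExt_compl {a : A} [Fintype ({a}ᶜ : Set A)] (hmin : ∀ b, ¬ r a b) :
    numExtLast r a = numExt (subrel r {a}ᶜ) := by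
  obtain ⟨n, hn⟩ := Nat.exists_eq_succ_of_ne_zero (Fintype.card_pos_iff.2 ⟨a⟩).ne'
  have hc : Fintype.card ({a}ᶜ : Set A) = n := by
    rw [Fintype.card_compl_set, Set.card_singleton, hn, Nat.succ_sub_one]
  rw [numExtLast_eq_natCard hn, numExt_eq_natCard hc]
  let N : {Y : Fin (n + 1) ≃ A // Y (Fin.last n) = a} ≃ (Fin n ≃ {y // y ≠ a}) :=
    (Equiv.subtypeEquiv (finSuccEquivLast.equivCongr (Equiv.refl A)) (by simp)).trans
      (Equiv.optionSubtype a)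
  have hN : ∀ Y i, (N Y i : A) = Y.1 i.castSucc := by
    intro Y i; simp [N]
  refine Nat.card_congr ((Equiv.subtypeEquivRight fun Y => and_comm).trans
    ((Equiv.subtypeSubtypeEquivSubtypeInter _ _).symm.trans (N.subtypeEquiv fun Y => ?_)))
  rw [isLinExt_iff_of_forall_not_rel_last _ (by rw [Y.2]; exact hmin)]
  simp only [← hN]
  rfl

end LinearExtensions

section Suborders

variable {A : Type*} {r : A → A → Prop}

theorem IsLinExt.numExt_subrel_pos {n : ℕ} {Y : Fin n ≃ A} (hY : IsLinExt r Y) (S : Set A)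
    [Fintype S] : 0 < numExt (subrel r S) := by
  set T : Finset (Fin n) := Finset.univ.filter fun i => Y i ∈ S
  refine numExt_pos_of_isLinExt
    ((T.orderIsoOfFin rfl).toEquiv.trans (Y.subtypeEquiv fun i => by simp [T])) ?_
  intro i j hij
  exact hY _ _ ((T.orderIsoOfFin rfl).strictMono hij)

theorem numExt_subrel_congr {S T : Set A} [Fintype S] [Fintype T] (h : S = T) :
    numExt (subrel r S) = numExt (subrel r T) :=
  numExt_congr ⟨Equiv.setCongr h, Iff.rfl⟩

theorem numExtLast_subrel_eq_numExt_subrel {S T : Set A} [Fintype S] [Fintype T] {a : A}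
    (ha : a ∈ S) (hmin : ∀ b ∈ S, ¬ r a b) (hT : S \ {a} = T) :
    numExtLast (subrel r S) ⟨a, ha⟩ = numExt (subrel r T) := by
  subst hT
  exact (numExtLast_eq_numExt_compl fun b => hmin b.1 b.2).trans <| numExt_congr
    ⟨{ toFun := fun x => ⟨x.1.1, x.1.2, fun h => x.2 (Subtype.ext h)⟩
       invFun := fun x => ⟨⟨x.1, x.2.1⟩, fun h => x.2.2 (congrArg Subtype.val h)⟩ }, Iff.rfl⟩

variable {m : ℕ}

/-- `numExtPrefix r Y k` is `C(r[{Y_1, …, Y_k}])`, the count for the first `k` entries of `Y`. -/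
noncomputable def numExtPrefix (r : A → A → Prop) (Y : Fin m ≃ A) (k : ℕ) : ℕ :=
  numExt (subrel r (Y '' {i | (i : ℕ) < k}))

theorem numExt_subrel_eq_numExtPrefix {Y : Fin m ≃ A} {k : ℕ} {S : Set A} [Fintype S]
    (h : S = Y '' {i | (i : ℕ) < k}) : numExt (subrel r S) = numExtPrefix r Y k :=
  numExt_subrel_congr h

theorem IsLinExt.numExtPrefix_pos {Y : Fin m ≃ A} (hY : IsLinExt r Y) (k : ℕ) :
    0 < numExtPrefix r Y k :=
  hY.numExt_subrel_pos _

theorem numExtPrefix_zero (r : A → A → Prop) (Y : Fin m ≃ A) : numExtPrefix r Y 0 = 1 := by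
  have : IsEmpty (Y '' {i | (i : ℕ) < 0}) := ⟨fun ⟨_, _, hi, _⟩ => Nat.not_lt_zero _ hi⟩
  exact numExt_of_isEmpty _

theorem numExtPrefix_self [Fintype A] (r : A → A → Prop) (Y : Fin m ≃ A) :
    numExtPrefix r Y m = numExt r :=
  numExt_congr ⟨Equiv.subtypeUnivEquiv fun a => ⟨Y.symm a, (Y.symm a).isLt, Y.apply_symm_apply a⟩,
    Iff.rfl⟩

theorem setOf_exists_le_eq_image (Y : Fin m ≃ A) (j : Fin m) :
    {a | ∃ i, i ≤ j ∧ Y i = a} = Y '' {i | (i : ℕ) < j + 1} := by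
  ext a
  simp only [Set.mem_ofPred_eq, Set.mem_image, Fin.le_def, Nat.lt_succ_iff]

theorem setOf_exists_le_sdiff_eq_image (Y : Fin m ≃ A) (j : Fin m) :
    {a | ∃ i, i ≤ j ∧ Y i = a} \ {Y j} = Y '' {i | (i : ℕ) < j} := by
  change Y '' Set.Iic j \ {Y j} = _
  rw [← Set.image_singleton, ← Set.image_sdiff Y.injective, Set.Iic_sdiff_right]
  rfl

end Suborders

theorem stmt9_general {A : Type*} [Fintype A] [DecidableEq A] (m : ℕ)
    (r : A → A → Prop) (hirr : Irreflexive r)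
    (Y : Fin m ≃ A) :
    (∏ j : Fin m,
      ((numExtLast (subrel r {a : A | ∃ i : Fin m, i ≤ j ∧ Y i = a})
          ⟨Y j, ⟨j, le_refl j, rfl⟩⟩ : ℕ) : ℝ) /
        ((numExt (subrel r {a : A | ∃ i : Fin m, i ≤ j ∧ Y i = a}) : ℕ) : ℝ)) =
      if IsLinExt r Y then 1 / ((numExt r : ℕ) : ℝ) else 0 := by
  split_ifs with hY
  · calc _ = ∏ k ∈ Finset.range m, (numExtPrefix r Y k : ℝ) / numExtPrefix r Y (k + 1) := by
          rw [← Fin.prod_univ_eq_prod_range]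
          refine Finset.prod_congr rfl fun j _ => ?_
          have hmin : ∀ b ∈ {a | ∃ i, i ≤ j ∧ Y i = a}, ¬ r (Y j) b := by
            rintro _ ⟨i, hij, rfl⟩
            rcases hij.lt_or_eq with hij | rfl
            exacts [hY i j hij, hirr _]
          rw [numExtLast_subrel_eq_numExt_subrel _ hmin (setOf_exists_le_sdiff_eq_image Y j),
            numExt_subrel_eq_numExtPrefix rfl,
            numExt_subrel_eq_numExtPrefix (setOf_exists_le_eq_image Y j)]
      _ = numExtPrefix r Y 0 / numExtPrefix r Y m :=
          Finset.prod_range_div'_of_ne_zero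
            (fun k => Nat.cast_ne_zero.2 (hY.numExtPrefix_pos k).ne') m
      _ = 1 / numExt r := by rw [numExtPrefix_zero, numExtPrefix_self, Nat.cast_one]
  · obtain ⟨i, j, hij, hr⟩ : ∃ i j, i < j ∧ r (Y j) (Y i) := by simpa [IsLinExt] using hY
    refine Finset.prod_eq_zero (Finset.mem_univ j) ?_
    rw [numExtLast_eq_zero_of_rel (b := ⟨Y i, i, hij.le, rfl⟩) hr
      fun h => hij.ne (Y.injective (congrArg Subtype.val h)), Nat.cast_zero, zero_div]

/-- Telescoping reduction of the bottom-up queue-jumping model at zero noise: the product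
of the prefix-suborder ratios (using last-entry counts) equals `1/C(r)` when `Y` is a
linear extension of `r`, and `0` otherwise. -/
theorem stmt9 {A : Type*} [Fintype A] [DecidableEq A] (m : ℕ) (hm : 1 ≤ m)
    (hcard : Fintype.card A = m)
    (r : A → A → Prop) (hirr : Irreflexive r) (htrans : Transitive r)
    (Y : Fin m ≃ A) :
    (∏ j : Fin m,
      ((numExtLast (subrel r {a : A | ∃ i : Fin m, i ≤ j ∧ Y i = a})
          ⟨Y j, ⟨j, le_refl j, rfl⟩⟩ : ℕ) : ℝ) /
        ((numExt (subrel r {a : A | ∃ i : Fin m, i ≤ j ∧ Y i = a}) : ℕ) : ℝ)) =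
      if IsLinExt r Y then 1 / ((numExt r : ℕ) : ℝ) else 0 :=
  stmt9_general m r hirr Y
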